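/- arXiv:2510.20024 — 5 statements merged into one kernel-verified Lean document; each statement's English description precedes it below -/
import Mathlib

section
/- Let θ ∈ (0,1) and let L be an even integer with L ≥ 2. Then there exists a sequence (b_k)_{k∈ℕ} of irrational numbers satisfying: (a) b_k is monotonically increasing with 1 < b_k < L for all k; (b) lim_{k→∞} b_k = L; (c) h(b_k k) ∈ (−θ, 0) for all k and lim_{k→∞} h(b_k k) = −θ; (d) there is a constant C > 0 with |b_{k+1} − b_k| ≤ C/k² for all k ∈ ℕ. -/
open MeasureTheory Real Set Filter
open scoped ENNReal NNReal Topology RealInnerProductSpace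

noncomputable section

/-- The plane `ℝ²` with the Euclidean structure. -/
abbrev E2 : Type := EuclideanSpace ℝ (Fin 2)

/-- The space of real `2 × 2` matrices, as functions `Fin 2 → Fin 2 → ℝ`. -/
abbrev M2 : Type := Fin 2 → Fin 2 → ℝ

/-- The open unit ball `B² ⊂ ℝ²`. -/
def ball2 : Set E2 := Metric.ball 0 1

/-- `h(t) = √θ sin(π t)`. -/
def hfun (θ t : ℝ) : ℝ := Real.sqrt θ * Real.sin (Real.pi * t)

/-- The operator `A(η) = ((1+√θ sin(π η₁))η₁, (1+√θ sin(π η₂))η₂)`. -/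
def Aop (θ : ℝ) (η : E2) : E2 :=
  (EuclideanSpace.equiv (Fin 2) ℝ).symm fun i => (1 + hfun θ (η i)) * η i

/-- `q̄ = sup_{L ∈ 2ℕ, L > 0} (1 − 1/(1+L) + 1/(1+L(1−θ)))`. -/
def qbar (θ : ℝ) : ℝ :=
  sSup {q : ℝ | ∃ L : ℕ, 0 < L ∧ Even L ∧ q = 1 - 1/(1+(L:ℝ)) + 1/(1+(L:ℝ)*(1-θ))}

/-- Frobenius norm of a `2 × 2` matrix. -/
def frob (X : M2) : ℝ := Real.sqrt (∑ i, ∑ j, X i j ^ 2)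

/-- The class `𝒢` of gradients `X = (x₁,x₂;x₃,x₄)` with `x₁,x₂ ≠ 0` and
`A(x₁,x₂) − J(x₃,x₄) = 0`, where `J` is rotation by `π/2`. -/
def Gclass (θ : ℝ) : Set M2 :=
  {X | X 0 0 ≠ 0 ∧ X 0 1 ≠ 0 ∧
    (1 + hfun θ (X 0 0)) * X 0 0 = -(X 1 1) ∧
    (1 + hfun θ (X 0 1)) * X 0 1 = X 1 0}

/-- The class `ℬ_k^{(m)}`. -/
def Bclass (b : ℕ → ℝ) (m : ℝ) (k : ℕ) : Set M2 :=
  {X | ∃ σ₁ σ₂ : ℝ, (σ₁ = 1 ∨ σ₁ = -1) ∧ (σ₂ = 1 ∨ σ₂ = -1) ∧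
    X = ![![σ₁ * (m + b k * k), σ₂ * m], ![σ₂ * m, σ₁ * (m + k)]]}

/-- The class `𝒞_k^{(m)}`. -/
def Cclass (b : ℕ → ℝ) (m : ℝ) (k : ℕ) : Set M2 :=
  {X | ∃ σ₁ σ₂ : ℝ, (σ₁ = 1 ∨ σ₁ = -1) ∧ (σ₂ = 1 ∨ σ₂ = -1) ∧
    X = ![![σ₁ * m, σ₂ * (m + b k * k)], ![-(σ₂ * (m + k)), -(σ₁ * m)]]}

/-- The class `𝒟_k^{(m)}`. -/
def Dclass (b : ℕ → ℝ) (m : ℝ) (k : ℕ) : Set M2 :=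
  {X | ∃ σ₁ σ₂ : ℝ, (σ₁ = 1 ∨ σ₁ = -1) ∧ (σ₂ = 1 ∨ σ₂ = -1) ∧
    X = ![![σ₁ * (m + b k * k), σ₂ * (m + b k * k)], ![-(σ₂ * (m + k)), σ₁ * (m + k)]]}

/-- `S_k := diag(b_k k, k)`. -/
def Smat (b : ℕ → ℝ) (k : ℕ) : M2 := ![![b k * k, 0], ![0, (k : ℝ)]]

/-- `G_k := diag(b_{k-1}(k-1), −b_{k-1}(k-1)(1+h(b_{k-1}(k-1))))`, i.e. the matrix
denoted `G_{k}` in the paper (defined there with index shifted by one). -/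
def Gmat (θ : ℝ) (b : ℕ → ℝ) (k : ℕ) : M2 :=
  ![![b (k-1) * ((k:ℝ) - 1), 0],
    ![0, -(b (k-1) * ((k:ℝ) - 1)) * (1 + hfun θ (b (k-1) * ((k:ℝ) - 1)))]]

/-- `G̃_k := diag(−k, k)`. -/
def Gtil (k : ℕ) : M2 := ![![-(k : ℝ), 0], ![0, (k : ℝ)]]

/-- `μ` is obtained from `ν` by an elementary splitting. -/
def ElemSplit (μ ν : Measure M2) : Prop :=
  ∃ (l l' : ℝ) (B B₁ B₂ : M2) (ν' : Measure M2),
    IsProbabilityMeasure ν' ∧ 0 < l ∧ l ≤ 1 ∧ 0 < l' ∧ l' < 1 ∧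
    ν = ENNReal.ofReal l • Measure.dirac B + ENNReal.ofReal (1 - l) • ν' ∧
    B = l' • B₁ + (1 - l') • B₂ ∧
    (Matrix.of (B₂ - B₁)).rank = 1 ∧
    μ = ENNReal.ofReal l •
          (ENNReal.ofReal l' • Measure.dirac B₁ + ENNReal.ofReal (1 - l') • Measure.dirac B₂)
        + ENNReal.ofReal (1 - l) • ν'

/-- Laminates of finite order: the smallest collection of probability measures on `ℝ^{2×2}`
containing the Dirac masses and invariant under elementary splitting. -/
inductive IsLaminate : Measure M2 → Prop
  | dirac (B : M2) : IsLaminate (Measure.dirac B)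
  | split {ν μ : Measure M2} : IsLaminate ν → ElemSplit μ ν → IsLaminate μ

/-- A regular domain: open, bounded, connected, with boundary of zero Lebesgue measure. -/
def RegularDomain (Ω : Set E2) : Prop :=
  IsOpen Ω ∧ IsConnected Ω ∧ Bornology.IsBounded Ω ∧ volume (frontier Ω) = 0

/-- The (a.e.-defined) gradient matrix of a map `w : ℝ² → ℝ²`. -/
def gradM (w : E2 → E2) (x : E2) : M2 :=
  fun i j => fderiv ℝ w x (EuclideanSpace.single j 1) i

/-- The affine map `l_{X,b} : x ↦ Xx + b`. -/
def affineMap2 (X : M2) (b : E2) (x : E2) : E2 :=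
  (EuclideanSpace.equiv (Fin 2) ℝ).symm (fun i => ∑ j, X i j * x j) + b

/-- Membership in `W^{1,1}(Ω,ℝ²)`: integrable, a.e. differentiable with integrable gradient,
which is the weak (distributional) gradient. -/
def MemW11 (Ω : Set E2) (w : E2 → E2) : Prop :=
  IntegrableOn w Ω volume ∧
  (∀ᵐ x ∂(volume.restrict Ω), DifferentiableAt ℝ w x) ∧
  IntegrableOn (fun x => frob (gradM w x)) Ω volume ∧
  ∀ φ : E2 → ℝ, ContDiff ℝ (⊤ : ℕ∞) φ → HasCompactSupport φ → tsupport φ ⊆ Ω →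
    ∀ i j, ∫ x in Ω, w x i * fderiv ℝ φ x (EuclideanSpace.single j 1)
      = - ∫ x in Ω, gradM w x i j * φ x

/-- Membership in `C^α(Ω̄, ℝ²)`. -/
def MemCalpha (α : ℝ) (Ω : Set E2) (w : E2 → E2) : Prop :=
  ContinuousOn w (closure Ω) ∧ ∃ C : ℝ≥0, HolderOnWith C α.toNNReal w (closure Ω)

/-- Piecewise affine maps. -/
def IsPAffine (Ω : Set E2) (w : E2 → E2) : Prop :=
  ∃ (ι : Type) (_ : Countable ι) (Ωi : ι → Set E2),
    (∀ i, RegularDomain (Ωi i)) ∧ (∀ i, Ωi i ⊆ Ω) ∧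
    Pairwise (Function.onFun Disjoint Ωi) ∧
    volume (Ω \ ⋃ i, Ωi i) = 0 ∧
    ∀ i, ∃ (X : M2) (c : E2), ∀ x ∈ Ωi i, w x = affineMap2 X c x

/-- Sup norm over a set. -/
def supNormOn (s : Set E2) (f : E2 → E2) : ℝ := sSup ((fun x => ‖f x‖) '' s)

/-- Hölder seminorm over a set. -/
def holderSemiOn (α : ℝ) (s : Set E2) (f : E2 → E2) : ℝ :=
  sSup {c : ℝ | ∃ x ∈ s, ∃ y ∈ s, x ≠ y ∧ c = ‖f x - f y‖ / dist x y ^ α}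

/-- The `C^α` norm: sup norm plus Hölder seminorm (for `α = 0`, the sup norm). -/
def holderNormOn (α : ℝ) (s : Set E2) (f : E2 → E2) : ℝ :=
  if α = 0 then supNormOn s f else supNormOn s f + holderSemiOn α s f


set_option maxHeartbeats 1000000 in
/-- **Lemma 3.1.** For `θ ∈ (0,1)` and an even integer `L ≥ 2` there is a sequence of
irrational numbers `b_k` (for `k ≥ 1`) which is strictly increasing, lies in `(1, L)`,
converges to `L`, satisfies `h(b_k k) ∈ (−θ, 0)` with `h(b_k k) → −θ`, and
`|b_{k+1} − b_k| = O(1/k²)`. -/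
theorem statement2 (θ : ℝ) (hθ : θ ∈ Set.Ioo (0:ℝ) 1) (L : ℕ) (hLeven : Even L) (hL : 2 ≤ L) :
    ∃ b : ℕ → ℝ,
      (∀ k, 1 ≤ k → Irrational (b k)) ∧
      (∀ k, 1 ≤ k → b k < b (k+1)) ∧
      (∀ k, 1 ≤ k → 1 < b k ∧ b k < L) ∧
      Tendsto b atTop (𝓝 (L : ℝ)) ∧
      (∀ k, 1 ≤ k → hfun θ (b k * k) ∈ Set.Ioo (-θ) 0) ∧
      Tendsto (fun k => hfun θ (b k * k)) atTop (𝓝 (-θ)) ∧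
      (∃ C : ℝ, 0 < C ∧ ∀ k : ℕ, 1 ≤ k → |b (k+1) - b k| ≤ C / (k:ℝ)^2) := by
  obtain ⟨hθ0, hθ1⟩ := hθ
  have hpi : (0:ℝ) < π := Real.pi_pos
  have hsq0 : 0 < Real.sqrt θ := Real.sqrt_pos.mpr hθ0
  have hsqsq : Real.sqrt θ * Real.sqrt θ = θ := Real.mul_self_sqrt hθ0.le
  have hsq1 : Real.sqrt θ < 1 := by nlinarith [Real.sqrt_nonneg θ]
  set s : ℝ := Real.arcsin (Real.sqrt θ) / π with hs_def
  have harc0 : 0 < Real.arcsin (Real.sqrt θ) := Real.arcsin_pos.mpr hsq0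
  have harc2 : Real.arcsin (Real.sqrt θ) < π/2 := Real.arcsin_lt_pi_div_two.mpr hsq1
  have hs0 : 0 < s := div_pos harc0 hpi
  have hs12 : s < 1/2 := by rw [hs_def, div_lt_iff₀ hpi]; linarith
  have hpis : π * s = Real.arcsin (Real.sqrt θ) := by
    rw [hs_def]; field_simp
  have hsin : Real.sin (π * s) = Real.sqrt θ := by
    rw [hpis]; exact Real.sin_arcsin (by linarith [Real.sqrt_nonneg θ]) hsq1.le
  have hL2 : (2:ℝ) ≤ (L:ℝ) := by exact_mod_cast hL
  -- choose irrational d n in (s/(n+2), s*(2n+3)/(2(n+1)(n+2)))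
  have hlohi : ∀ n : ℕ, s/((n:ℝ)+2) < s*(2*(n:ℝ)+3)/(2*((n:ℝ)+1)*((n:ℝ)+2)) := by
    intro n
    have hN : (0:ℝ) ≤ (n:ℝ) := Nat.cast_nonneg n
    rw [div_lt_div_iff₀ (by positivity) (by positivity)]
    nlinarith [hs0]
  choose d hd1 hd2 hd3 using fun n => exists_irrational_btwn (hlohi n)
  have hdpos : ∀ n, 0 < d n := by
    intro n
    have hN : (0:ℝ) ≤ (n:ℝ) := Nat.cast_nonneg n
    have h2 : 0 < s / ((n:ℝ)+2) := div_pos hs0 (by linarith)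
    linarith [hd2 n]
  have hdlt : ∀ n, d n < s := by
    intro n
    have hN : (0:ℝ) ≤ (n:ℝ) := Nat.cast_nonneg n
    refine lt_of_lt_of_le (hd3 n) ?_
    rw [div_le_iff₀ (by positivity)]
    nlinarith [mul_nonneg hs0.le (mul_nonneg hN hN), mul_nonneg hs0.le hN, hs0.le]
  -- upper bound d n ≤ s/(n+1)
  have hdub : ∀ n : ℕ, d n ≤ s / ((n:ℝ)+1) := by
    intro n
    have hN : (0:ℝ) ≤ (n:ℝ) := Nat.cast_nonneg n
    refine le_of_lt (lt_of_lt_of_le (hd3 n) ?_)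
    rw [div_le_div_iff₀ (by positivity) (by positivity)]
    nlinarith [hs0]
  -- strict decrease
  have hstep : ∀ n : ℕ, d (n+1) < d n := by
    intro n
    have hN : (0:ℝ) ≤ (n:ℝ) := Nat.cast_nonneg n
    have h1 : d (n+1) < s*(2*(n:ℝ)+5)/(2*((n:ℝ)+2)*((n:ℝ)+3)) := by
      have := hd3 (n+1); push_cast at this; convert this using 2 <;> ring
    have h2 : s*(2*(n:ℝ)+5)/(2*((n:ℝ)+2)*((n:ℝ)+3)) ≤ s/((n:ℝ)+2) := by
      rw [div_le_div_iff₀ (by positivity) (by positivity)]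
      nlinarith [hs0]
    exact lt_of_lt_of_le h1 (le_trans h2 (hd2 n).le)
  -- lower bound for d n * (n+1) and upper bound
  have htlb : ∀ n : ℕ, s * ((n:ℝ)+1) / ((n:ℝ)+2) < d n * ((n:ℝ)+1) := by
    intro n
    have hN : (0:ℝ) ≤ (n:ℝ) := Nat.cast_nonneg n
    have := hd2 n
    rw [div_lt_iff₀ (by positivity)] at this
    rw [div_lt_iff₀ (by positivity)]
    nlinarith [this]
  have htub : ∀ n : ℕ, d n * ((n:ℝ)+1) < s := by
    intro n
    have hN : (0:ℝ) ≤ (n:ℝ) := Nat.cast_nonneg n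
    have h1 := hd3 n
    rw [lt_div_iff₀ (by positivity)] at h1
    nlinarith [hs0, hdpos n]
  -- key identity: h evaluated at b_k k
  have hkey : ∀ n : ℕ, hfun θ (((L:ℝ) - d n) * ((n:ℝ)+1))
      = -(Real.sqrt θ * Real.sin (π * (d n * ((n:ℝ)+1)))) := by
    intro n
    obtain ⟨m, hm⟩ := hLeven
    have harg : π * (((L:ℝ) - d n) * ((n:ℝ)+1))
        = -(π * (d n * ((n:ℝ)+1))) + (m*(n+1) : ℕ) * (2*π) := by
      have hLm : (L:ℝ) = 2*(m:ℝ) := by rw [hm]; push_cast; ring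
      push_cast
      rw [hLm]; ring
    rw [hfun, harg, Real.sin_add_nat_mul_two_pi, Real.sin_neg]
    ring
  -- sin bounds
  have hsinpos : ∀ n : ℕ, 0 < Real.sin (π * (d n * ((n:ℝ)+1))) := by
    intro n
    have hN : (0:ℝ) ≤ (n:ℝ) := Nat.cast_nonneg n
    have ht0 : 0 < d n * ((n:ℝ)+1) := mul_pos (hdpos n) (by positivity)
    refine Real.sin_pos_of_pos_of_lt_pi (mul_pos hpi ht0) ?_
    have : π * (d n * ((n:ℝ)+1)) < π * s := by
      exact (mul_lt_mul_iff_right₀ hpi).mpr (htub n)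
    calc π * (d n * ((n:ℝ)+1)) < π * s := this
    _ = Real.arcsin (Real.sqrt θ) := hpis
    _ < π := by linarith
  have hsinlt : ∀ n : ℕ, Real.sin (π * (d n * ((n:ℝ)+1))) < Real.sqrt θ := by
    intro n
    have hN : (0:ℝ) ≤ (n:ℝ) := Nat.cast_nonneg n
    have ht0 : 0 < d n * ((n:ℝ)+1) := mul_pos (hdpos n) (by positivity)
    have htpos : 0 < π * (d n * ((n:ℝ)+1)) := mul_pos hpi ht0
    have hlt : π * (d n * ((n:ℝ)+1)) < π * s := (mul_lt_mul_iff_right₀ hpi).mpr (htub n)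
    have hub2 : π * (d n * ((n:ℝ)+1)) < π / 2 := by
      have h := hlt; rw [hpis] at h; linarith
    have hs2 : π * s ≤ π / 2 := by rw [hpis]; linarith
    have hs2' : -(π/2) ≤ π * s := by rw [hpis]; linarith
    rw [← hsin]
    exact Real.strictMonoOn_sin ⟨by linarith, hub2.le⟩ ⟨hs2', hs2⟩ hlt
  refine ⟨fun k => (L:ℝ) - d (k-1), ?_, ?_, ?_, ?_, ?_, ?_, ⟨3, by norm_num, ?_⟩⟩
  · -- irrational
    intro k hk
    have := ((hd1 (k-1)).neg).natCast_add L
    simpa [sub_eq_add_neg] using this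
  · -- strictly increasing
    intro k hk
    obtain ⟨n, rfl⟩ : ∃ n, k = n + 1 := ⟨k-1, (Nat.succ_pred_eq_of_pos hk).symm⟩
    simp only [Nat.add_sub_cancel]
    have := hstep n
    linarith
  · -- bounds
    intro k hk
    obtain ⟨n, rfl⟩ : ∃ n, k = n + 1 := ⟨k-1, (Nat.succ_pred_eq_of_pos hk).symm⟩
    simp only [Nat.add_sub_cancel]
    constructor
    · have := hdlt n; linarith
    · have := hdpos n; linarith
  · -- tendsto b L
    have hd0 : Tendsto (fun k : ℕ => d (k-1)) atTop (𝓝 0) := by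
      apply squeeze_zero_norm' (a := fun k : ℕ => s / (k:ℝ))
      · filter_upwards [eventually_ge_atTop 1] with k hk
        obtain ⟨n, rfl⟩ : ∃ n, k = n + 1 := ⟨k-1, (Nat.succ_pred_eq_of_pos hk).symm⟩
        rw [Nat.add_sub_cancel, Real.norm_eq_abs, abs_of_pos (hdpos n)]
        have := hdub n; push_cast; linarith
      · exact tendsto_const_div_atTop_nhds_zero_nat s
    have : Tendsto (fun k : ℕ => (L:ℝ) - d (k-1)) atTop (𝓝 ((L:ℝ) - 0)) :=
      tendsto_const_nhds.sub hd0
    simpa using this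
  · -- hfun membership
    intro k hk
    obtain ⟨n, rfl⟩ : ∃ n, k = n + 1 := ⟨k-1, (Nat.succ_pred_eq_of_pos hk).symm⟩
    simp only [Nat.add_sub_cancel]
    have hcast : ((n+1 : ℕ) : ℝ) = (n:ℝ) + 1 := by push_cast; ring
    rw [hcast, hkey n]
    constructor
    · have h1 := hsinlt n
      have h2 := hsinpos n
      nlinarith [hsq0]
    · have h1 := hsinpos n
      nlinarith [hsq0]
  · -- tendsto hfun
    have htend_t : Tendsto (fun k : ℕ => d (k-1) * (k:ℝ)) atTop (𝓝 s) := by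
      have h0 : Tendsto (fun k : ℕ => d (k-1) * (k:ℝ) - s) atTop (𝓝 0) := by
        apply squeeze_zero_norm' (a := fun k : ℕ => s / (k:ℝ))
        · filter_upwards [eventually_ge_atTop 1] with k hk
          obtain ⟨n, rfl⟩ : ∃ n, k = n + 1 := ⟨k-1, (Nat.succ_pred_eq_of_pos hk).symm⟩
          have hN : (0:ℝ) ≤ (n:ℝ) := Nat.cast_nonneg n
          rw [Nat.add_sub_cancel]
          have hcast : ((n+1 : ℕ) : ℝ) = (n:ℝ) + 1 := by push_cast; ring
          rw [hcast, Real.norm_eq_abs, abs_of_neg (by have := htub n; linarith)]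
          have hlb := htlb n
          have key : s - s * ((n:ℝ)+1) / ((n:ℝ)+2) ≤ s / ((n:ℝ)+1) := by
            rw [sub_le_iff_le_add, div_add_div _ _ (by positivity : ((n:ℝ)+1) ≠ 0)
              (by positivity : ((n:ℝ)+2) ≠ 0), le_div_iff₀ (by positivity)]
            nlinarith [hs0.le, mul_nonneg hs0.le hN]
          linarith
        · exact tendsto_const_div_atTop_nhds_zero_nat s
      have := h0.add_const s
      simpa using this
    have hmain : Tendsto (fun k : ℕ => -(Real.sqrt θ * Real.sin (π * (d (k-1) * (k:ℝ)))))
        atTop (𝓝 (-θ)) := by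
      have h1 : Tendsto (fun k : ℕ => π * (d (k-1) * (k:ℝ))) atTop (𝓝 (π * s)) :=
        htend_t.const_mul π
      have h2 : Tendsto (fun k : ℕ => Real.sin (π * (d (k-1) * (k:ℝ)))) atTop
          (𝓝 (Real.sin (π * s))) := (Real.continuous_sin.tendsto _).comp h1
      have h3 := (h2.const_mul (Real.sqrt θ)).neg
      rw [hsin] at h3
      rw [show Real.sqrt θ * Real.sqrt θ = θ from hsqsq] at h3
      exact h3
    refine hmain.congr' ?_
    filter_upwards [eventually_ge_atTop 1] with k hk
    obtain ⟨n, rfl⟩ : ∃ n, k = n + 1 := ⟨k-1, (Nat.succ_pred_eq_of_pos hk).symm⟩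
    rw [Nat.add_sub_cancel]
    have hcast : ((n+1 : ℕ) : ℝ) = (n:ℝ) + 1 := by push_cast; ring
    rw [hcast, hkey n]
  · -- O(1/k^2) bound
    intro k hk
    obtain ⟨n, rfl⟩ : ∃ n, k = n + 1 := ⟨k-1, (Nat.succ_pred_eq_of_pos hk).symm⟩
    have hN : (0:ℝ) ≤ (n:ℝ) := Nat.cast_nonneg n
    simp only [Nat.add_sub_cancel]
    have hcast : ((n+1 : ℕ) : ℝ) = (n:ℝ) + 1 := by push_cast; ring
    rw [show ((L:ℝ) - d (n+1)) - ((L:ℝ) - d n) = d n - d (n+1) by ring, hcast,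
      abs_of_pos (by have := hstep n; linarith)]
    set N : ℝ := (n:ℝ)
    have e1 : d n ≤ s*(2*N+3)/(2*(N+1)*(N+2)) := (hd3 n).le
    have e2 : s/(N+3) ≤ d (n+1) := by
      have h := hd2 (n+1); push_cast at h
      have heq : (n:ℝ)+1+2 = N+3 := by ring
      rw [heq] at h; exact h.le
    have key : s*(2*N+3)/(2*(N+1)*(N+2)) - s/(N+3) ≤ 3/((N+1)^2) := by
      rw [div_sub_div _ _ (by positivity : (2*(N+1)*(N+2)) ≠ 0)
        (by positivity : (N+3) ≠ 0), div_le_div_iff₀ (by positivity) (by positivity)]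
      nlinarith [mul_nonneg (by linarith : (0:ℝ) ≤ 1/2 - s)
        (by positivity : (0:ℝ) ≤ (3*N+5)*(N+1)^2),
        mul_nonneg (mul_nonneg hN hN) hN, mul_nonneg hN hN, hs0.le]
    linarith

end
end

section
/- For every k ∈ ℕ, setting α_{k+1} := 1/((k+1) + b_k k(1+h(b_k k))), β_{k+1} := (1−α_{k+1})·(b_{k+1}(k+1) − b_k k)/(b_{k+1}(k+1) + (k+1)), and γ_{k+1} := (1−α_{k+1})·(1 − (b_{k+1}(k+1) − b_k k)/(b_{k+1}(k+1) + (k+1))), one has α_{k+1}, β_{k+1}, γ_{k+1} ∈ (0,1), α_{k+1} + β_{k+1} + γ_{k+1} = 1, the matrix identity S_k = α_{k+1} G_{k+1} + β_{k+1} G̃_{k+1} + γ_{k+1} S_{k+1} holds, and the probability measure α_{k+1} δ_{G_{k+1}} + β_{k+1} δ_{G̃_{k+1}} + γ_{k+1} δ_{S_{k+1}} is a laminate of finite order with barycenter S_k. -/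
open MeasureTheory Real Set Filter
open scoped ENNReal NNReal Topology RealInnerProductSpace

noncomputable section

set_option maxHeartbeats 1000000

lemma my_rank_diag (d : Fin 2 → ℝ) (h0 : d 0 = 0 ∨ d 1 = 0) (h1 : d 0 ≠ 0 ∨ d 1 ≠ 0) :
    (Matrix.diagonal d).rank = 1 := by
  classical
  rw [Matrix.rank_diagonal, Fintype.card_eq_one_iff]
  rcases h0 with h0 | h0
  · have hd1 : d 1 ≠ 0 := by tauto
    refine ⟨⟨1, hd1⟩, ?_⟩
    rintro ⟨i, hi⟩; fin_cases i
    · exact absurd h0 hi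
    · rfl
  · have hd0 : d 0 ≠ 0 := by tauto
    refine ⟨⟨0, hd0⟩, ?_⟩
    rintro ⟨i, hi⟩; fin_cases i
    · rfl
    · exact absurd h0 hi

lemma my_integrable_dirac {f : M2 → ℝ} (hf : Measurable f) (a : M2) :
    Integrable f (Measure.dirac a) := by
  refine ⟨hf.aestronglyMeasurable, ?_⟩
  rw [HasFiniteIntegral, lintegral_dirac' _ (by measurability)]
  exact ENNReal.coe_lt_top



/-- **Lemma 3.3 (splitting step).** For every `k ≥ 1` the coefficients
`α_{k+1}, β_{k+1}, γ_{k+1}` lie in `(0,1)`, sum to `1`, satisfy the matrix identity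
`S_k = α_{k+1} G_{k+1} + β_{k+1} G̃_{k+1} + γ_{k+1} S_{k+1}`, and the measure
`α_{k+1} δ_{G_{k+1}} + β_{k+1} δ_{G̃_{k+1}} + γ_{k+1} δ_{S_{k+1}}` is a laminate of finite
order with barycenter `S_k`. -/
theorem statement4 (θ : ℝ) (hθ : θ ∈ Set.Ioo (0:ℝ) 1) (L : ℕ) (hLpos : 0 < L) (hLeven : Even L)
    (b : ℕ → ℝ)
    (hb_irr : ∀ k, 1 ≤ k → Irrational (b k))
    (hb_bound : ∀ k, 1 ≤ k → 1 < b k ∧ b k < L)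
    (hb_mono : ∀ k, 1 ≤ k → b k ≤ b (k+1))
    (hb_lim : Tendsto b atTop (𝓝 (L:ℝ)))
    (hb_h : ∀ k, 1 ≤ k → hfun θ (b k * k) ∈ Set.Ioo (-θ) 0)
    (hb_hlim : Tendsto (fun k => hfun θ (b k * k)) atTop (𝓝 (-θ)))
    (hb_O : ∃ c : ℝ, 0 < c ∧ ∀ k : ℕ, 1 ≤ k → |b (k+1) - b k| ≤ c / (k:ℝ)^2) :
    ∀ k : ℕ, 1 ≤ k → ∀ α β γ : ℝ,
      α = 1 / (((k:ℝ)+1) + b k * k * (1 + hfun θ (b k * k))) →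
      β = (1 - α) * ((b (k+1) * ((k:ℝ)+1) - b k * k) / (b (k+1) * ((k:ℝ)+1) + ((k:ℝ)+1))) →
      γ = (1 - α) * (1 - (b (k+1) * ((k:ℝ)+1) - b k * k) / (b (k+1) * ((k:ℝ)+1) + ((k:ℝ)+1))) →
      α ∈ Set.Ioo (0:ℝ) 1 ∧ β ∈ Set.Ioo (0:ℝ) 1 ∧ γ ∈ Set.Ioo (0:ℝ) 1 ∧
      α + β + γ = 1 ∧
      Smat b k = α • Gmat θ b (k+1) + β • Gtil (k+1) + γ • Smat b (k+1) ∧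
      (∀ μ : Measure M2,
        μ = ENNReal.ofReal α • Measure.dirac (Gmat θ b (k+1))
            + ENNReal.ofReal β • Measure.dirac (Gtil (k+1))
            + ENNReal.ofReal γ • Measure.dirac (Smat b (k+1)) →
        IsLaminate μ ∧ ∀ i j : Fin 2, ∫ X, X i j ∂μ = Smat b k i j) := by
  intro k hk α β γ hα hβ hγ
  have hK : (1:ℝ) ≤ (k:ℝ) := by exact_mod_cast hk
  obtain ⟨hb1, hbL⟩ := hb_bound k hk
  obtain ⟨hb1', _⟩ := hb_bound (k+1) (by omega)
  have hmono := hb_mono k hk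
  obtain ⟨hH1, hH2⟩ := hb_h k hk
  have h1H : 0 < 1 + hfun θ (b k * k) := by have := hθ.2; linarith
  have hBpos : (1:ℝ) < b k * k := by nlinarith
  have hD1 : (1:ℝ) < ((k:ℝ)+1) + b k * k * (1 + hfun θ (b k * k)) := by nlinarith
  have hDpos : (0:ℝ) < ((k:ℝ)+1) + b k * k * (1 + hfun θ (b k * k)) := by linarith
  have hα0 : 0 < α := by rw [hα]; positivity
  have hα1 : α < 1 := by rw [hα, div_lt_one hDpos]; linarith
  have hcB : b k * k < b (k+1) * ((k:ℝ)+1) := by nlinarith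
  have hcd : (0:ℝ) < b (k+1) * ((k:ℝ)+1) + ((k:ℝ)+1) := by nlinarith
  have hr0 : 0 < (b (k+1) * ((k:ℝ)+1) - b k * k) / (b (k+1) * ((k:ℝ)+1) + ((k:ℝ)+1)) :=
    div_pos (by linarith) hcd
  have hr1 : (b (k+1) * ((k:ℝ)+1) - b k * k) / (b (k+1) * ((k:ℝ)+1) + ((k:ℝ)+1)) < 1 := by
    rw [div_lt_one hcd]; linarith
  have hβ0 : 0 < β := by rw [hβ]; nlinarith
  have hβ1 : β < 1 := by rw [hβ]; nlinarith
  have hγ0 : 0 < γ := by rw [hγ]; nlinarith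
  have hγ1 : γ < 1 := by rw [hγ]; nlinarith
  have hsum : α + β + γ = 1 := by rw [hβ, hγ]; ring
  have harg : ((k+1:ℕ):ℝ) - 1 = (k:ℝ) := by push_cast; ring
  have hGmat : Gmat θ b (k+1)
      = ![![b k * k, 0], ![0, -(b k * k) * (1 + hfun θ (b k * k))]] := by
    funext i j
    fin_cases i <;> fin_cases j <;>
      simp [Gmat, Nat.add_sub_cancel, harg]
  have hmat : Smat b k = α • Gmat θ b (k+1) + β • Gtil (k+1) + γ • Smat b (k+1) := by
    rw [hGmat]
    funext i j
    fin_cases i <;> fin_cases j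
    · show b k * (k:ℝ) = α * (b k * k) + β * (-((k+1:ℕ):ℝ)) + γ * (b (k+1) * ((k+1:ℕ):ℝ))
      rw [hβ, hγ]
      push_cast
      field_simp
      ring
    · show (0:ℝ) = α * 0 + β * 0 + γ * 0
      ring
    · show (0:ℝ) = α * 0 + β * 0 + γ * 0
      ring
    · show (k:ℝ) = α * (-(b k * k) * (1 + hfun θ (b k * k))) + β * ((k+1:ℕ):ℝ) + γ * ((k+1:ℕ):ℝ)
      have hbg : β + γ = 1 - α := by linarith
      push_cast
      have h2 : (k:ℝ) = α * (-(b k * k) * (1 + hfun θ (b k * k))) + (1 - α) * ((k:ℝ)+1) := by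
        rw [hα]; linear_combination div_self hDpos.ne'
      conv_lhs => rw [h2]
      rw [← hbg]; ring
  refine ⟨⟨hα0, hα1⟩, ⟨hβ0, hβ1⟩, ⟨hγ0, hγ1⟩, hsum, hmat, ?_⟩
  intro μ hμ
  set P : M2 := ![![b k * k, 0], ![0, (k:ℝ) + 1]] with hPdef
  have hGt : Gtil (k+1) = ![![-((k:ℝ)+1), 0], ![0, (k:ℝ)+1]] := by
    funext i j
    fin_cases i <;> fin_cases j <;> simp [Gtil] <;> push_cast <;> ring
  have hS : Smat b (k+1) = ![![b (k+1) * ((k:ℝ)+1), 0], ![0, (k:ℝ)+1]] := by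
    funext i j
    fin_cases i <;> fin_cases j <;> simp [Smat] <;> push_cast <;> ring
  have hconv1 : Smat b k = α • Gmat θ b (k+1) + (1 - α) • P := by
    rw [hGmat]
    funext i j
    fin_cases i <;> fin_cases j
    · show b k * (k:ℝ) = α * (b k * k) + (1 - α) * (b k * k)
      ring
    · show (0:ℝ) = α * 0 + (1 - α) * 0
      ring
    · show (0:ℝ) = α * 0 + (1 - α) * 0
      ring
    · show (k:ℝ) = α * (-(b k * k) * (1 + hfun θ (b k * k))) + (1 - α) * ((k:ℝ) + 1)
      rw [hα]; linear_combination div_self hDpos.ne'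
  have hrank1 : (Matrix.of (P - Gmat θ b (k+1))).rank = 1 := by
    have he : Matrix.of (P - Gmat θ b (k+1))
        = Matrix.diagonal ![0, ((k:ℝ)+1) + b k * k * (1 + hfun θ (b k * k))] := by
      ext i j
      fin_cases i <;> fin_cases j <;>
        simp [hGmat, hPdef, Matrix.diagonal, Pi.sub_apply] <;> ring
    rw [he]
    exact my_rank_diag _ (Or.inl (by simp)) (Or.inr (by simpa using hDpos.ne'))
  have hconv2 : P = ((b (k+1) * ((k:ℝ)+1) - b k * k) / (b (k+1) * ((k:ℝ)+1) + ((k:ℝ)+1))) • Gtil (k+1)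
      + (1 - (b (k+1) * ((k:ℝ)+1) - b k * k) / (b (k+1) * ((k:ℝ)+1) + ((k:ℝ)+1))) • Smat b (k+1) := by
    rw [hGt, hS]
    funext i j
    fin_cases i <;> fin_cases j
    · show b k * (k:ℝ) = (b (k+1) * ((k:ℝ)+1) - b k * k) / (b (k+1) * ((k:ℝ)+1) + ((k:ℝ)+1)) * (-((k:ℝ)+1))
          + (1 - (b (k+1) * ((k:ℝ)+1) - b k * k) / (b (k+1) * ((k:ℝ)+1) + ((k:ℝ)+1))) * (b (k+1) * ((k:ℝ)+1))
      field_simp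
      ring
    · show (0:ℝ) = _ * 0 + _ * 0
      ring
    · show (0:ℝ) = _ * 0 + _ * 0
      ring
    · show (k:ℝ) + 1 = _ * ((k:ℝ)+1) + (1 - _) * ((k:ℝ)+1)
      ring
  have hrank2 : (Matrix.of (Smat b (k+1) - Gtil (k+1))).rank = 1 := by
    have he : Matrix.of (Smat b (k+1) - Gtil (k+1))
        = Matrix.diagonal ![b (k+1) * ((k:ℝ)+1) + ((k:ℝ)+1), 0] := by
      ext i j
      fin_cases i <;> fin_cases j <;>
        simp [hGt, hS, Matrix.diagonal, Pi.sub_apply] <;> ring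
    rw [he]
    exact my_rank_diag _ (Or.inr (by simp)) (Or.inl (by simpa using hcd.ne'))
  set μ1 : Measure M2 := ENNReal.ofReal α • Measure.dirac (Gmat θ b (k+1))
      + ENNReal.ofReal (1-α) • Measure.dirac P with hμ1def
  have lam1 : IsLaminate μ1 :=
    IsLaminate.split (IsLaminate.dirac (Smat b k))
      ⟨1, α, Smat b k, Gmat θ b (k+1), P, Measure.dirac 0, inferInstance, one_pos, le_rfl,
        hα0, hα1, by simp, hconv1, hrank1, by simp [hμ1def]⟩
  have hαa : (1:ℝ) - (1 - α) = α := by ring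
  have lam2 : IsLaminate
      (ENNReal.ofReal (1-α) •
        (ENNReal.ofReal ((b (k+1) * ((k:ℝ)+1) - b k * k) / (b (k+1) * ((k:ℝ)+1) + ((k:ℝ)+1)))
            • Measure.dirac (Gtil (k+1))
          + ENNReal.ofReal (1 - (b (k+1) * ((k:ℝ)+1) - b k * k) / (b (k+1) * ((k:ℝ)+1) + ((k:ℝ)+1)))
            • Measure.dirac (Smat b (k+1)))
        + ENNReal.ofReal (1-(1-α)) • Measure.dirac (Gmat θ b (k+1))) := by
    refine IsLaminate.split lam1
      ⟨1 - α, _, P, Gtil (k+1), Smat b (k+1), Measure.dirac (Gmat θ b (k+1)), inferInstance,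
        by linarith, by linarith, hr0, hr1, ?_, hconv2, hrank2, rfl⟩
    rw [hαa, hμ1def, add_comm]
  have hμeq : μ = ENNReal.ofReal (1-α) •
        (ENNReal.ofReal ((b (k+1) * ((k:ℝ)+1) - b k * k) / (b (k+1) * ((k:ℝ)+1) + ((k:ℝ)+1)))
            • Measure.dirac (Gtil (k+1))
          + ENNReal.ofReal (1 - (b (k+1) * ((k:ℝ)+1) - b k * k) / (b (k+1) * ((k:ℝ)+1) + ((k:ℝ)+1)))
            • Measure.dirac (Smat b (k+1)))
        + ENNReal.ofReal (1-(1-α)) • Measure.dirac (Gmat θ b (k+1)) := by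
    rw [hμ, hαa, smul_add, smul_smul, smul_smul,
      ← ENNReal.ofReal_mul (by linarith : (0:ℝ) ≤ 1 - α),
      ← ENNReal.ofReal_mul (by linarith : (0:ℝ) ≤ 1 - α), ← hβ, ← hγ]
    abel
  constructor
  · rw [hμeq]; exact lam2
  · intro i j
    have hf : Measurable fun X : M2 => X i j :=
      (measurable_pi_apply j).comp (measurable_pi_apply i)
    have hint : ∀ (c : ℝ) (a : M2),
        Integrable (fun X : M2 => X i j) (ENNReal.ofReal c • Measure.dirac a) :=
      fun c a => (my_integrable_dirac hf a).smul_measure ENNReal.ofReal_ne_top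
    rw [hμ, integral_add_measure ((hint α _).add_measure (hint β _)) (hint γ _),
      integral_add_measure (hint α _) (hint β _),
      integral_smul_measure, integral_smul_measure, integral_smul_measure,
      integral_dirac, integral_dirac, integral_dirac,
      ENNReal.toReal_ofReal hα0.le, ENNReal.toReal_ofReal hβ0.le, ENNReal.toReal_ofReal hγ0.le]
    have hh := congrFun (congrFun hmat i) j
    simp only [Pi.add_apply, Pi.smul_apply, smul_eq_mul] at hh ⊢
    rw [hh]
end
end

section
/- For every k₀ ∈ ℕ, setting λ := k₀/(b_{k₀}k₀(1+h(b_{k₀}k₀)) + k₀), one has λ ∈ (0,1) and the probability measure (λ/2)δ_{G_{k₀+1}} + (λ/2)δ_{−G_{k₀+1}} + ((1−λ)/2)δ_{S_{k₀}} + ((1−λ)/2)δ_{−S_{k₀}} is a laminate of finite order with barycenter the zero matrix. -/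
open MeasureTheory Real Set Filter
open scoped ENNReal NNReal Topology RealInnerProductSpace

noncomputable section

/-- Auxiliary: rank of a diagonal 2×2 matrix with exactly one nonzero entry is 1. -/
lemma rank_diag2_aux (x y : ℝ) (h : (x ≠ 0 ∧ y = 0) ∨ (x = 0 ∧ y ≠ 0)) :
    (Matrix.of (![![x, 0], ![0, y]] : M2)).rank = 1 := by
  have he : (Matrix.of (![![x, 0], ![0, y]] : M2)) = Matrix.diagonal ![x, y] := by
    ext i j
    fin_cases i <;> fin_cases j <;> simp [Matrix.diagonal]
  rw [he, Matrix.rank_diagonal]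
  rw [Fintype.card_eq_one_iff]
  rcases h with ⟨hx, hy⟩ | ⟨hx, hy⟩
  · refine ⟨⟨0, by simpa using hx⟩, ?_⟩
    rintro ⟨i, hi⟩
    fin_cases i
    · rfl
    · exact absurd (by simpa using hi) (by simp [hy])
  · refine ⟨⟨1, by simpa using hy⟩, ?_⟩
    rintro ⟨i, hi⟩
    fin_cases i
    · exact absurd (by simpa using hi) (by simp [hx])
    · rfl

/-- Auxiliary: matrix-entry functions are integrable against scaled Dirac measures. -/
lemma integrable_entry_aux (c : ℝ≥0∞) (hc : c ≠ ⊤) (B : M2) (i j : Fin 2) :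
    Integrable (fun X : M2 => X i j) (c • Measure.dirac B) := by
  have h : Integrable (fun X : M2 => X i j) (Measure.dirac B) := by
    refine (integrable_const (B i j)).congr ?_
    rw [Filter.EventuallyEq, MeasureTheory.ae_dirac_eq, Filter.eventually_pure]
  exact h.smul_measure hc

/-- **Lemma 3.4 (initial splitting).** For every `k₀ ≥ 1`, with
`λ := k₀/(b_{k₀}k₀(1+h(b_{k₀}k₀)) + k₀)` one has `λ ∈ (0,1)` and
`(λ/2)δ_{G_{k₀+1}} + (λ/2)δ_{−G_{k₀+1}} + ((1−λ)/2)δ_{S_{k₀}} + ((1−λ)/2)δ_{−S_{k₀}}`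
is a laminate of finite order with barycenter `0`. -/
theorem statement5 (θ : ℝ) (hθ : θ ∈ Set.Ioo (0:ℝ) 1) (L : ℕ) (hLpos : 0 < L) (hLeven : Even L)
    (b : ℕ → ℝ)
    (hb_irr : ∀ k, 1 ≤ k → Irrational (b k))
    (hb_bound : ∀ k, 1 ≤ k → 1 < b k ∧ b k < L)
    (hb_mono : ∀ k, 1 ≤ k → b k ≤ b (k+1))
    (hb_lim : Tendsto b atTop (𝓝 (L:ℝ)))
    (hb_h : ∀ k, 1 ≤ k → hfun θ (b k * k) ∈ Set.Ioo (-θ) 0)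
    (hb_hlim : Tendsto (fun k => hfun θ (b k * k)) atTop (𝓝 (-θ)))
    (hb_O : ∃ c : ℝ, 0 < c ∧ ∀ k : ℕ, 1 ≤ k → |b (k+1) - b k| ≤ c / (k:ℝ)^2) :
    ∀ k₀ : ℕ, 1 ≤ k₀ → ∀ lam : ℝ,
      lam = (k₀ : ℝ) / (b k₀ * k₀ * (1 + hfun θ (b k₀ * k₀)) + k₀) →
      lam ∈ Set.Ioo (0:ℝ) 1 ∧
      (∀ μ : Measure M2,
        μ = ENNReal.ofReal (lam/2) • Measure.dirac (Gmat θ b (k₀+1))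
            + ENNReal.ofReal (lam/2) • Measure.dirac (-(Gmat θ b (k₀+1)))
            + ENNReal.ofReal ((1-lam)/2) • Measure.dirac (Smat b k₀)
            + ENNReal.ofReal ((1-lam)/2) • Measure.dirac (-(Smat b k₀)) →
        IsLaminate μ ∧ ∀ i j : Fin 2, ∫ X, X i j ∂μ = 0) := by
  intro k₀ hk₀ lam hlam
  have hk0R : (1:ℝ) ≤ (k₀:ℝ) := by exact_mod_cast hk₀
  have hk0pos : (0:ℝ) < k₀ := lt_of_lt_of_le one_pos hk0R
  have hb1 : 1 < b k₀ := (hb_bound k₀ hk₀).1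
  have hapos : (0:ℝ) < b k₀ * k₀ := mul_pos (lt_trans one_pos hb1) hk0pos
  obtain ⟨hH1, hH2⟩ := hb_h k₀ hk₀
  have hθ1 : θ < 1 := hθ.2
  have h1H : 0 < 1 + hfun θ (b k₀ * k₀) := by nlinarith
  have hD : (0:ℝ) < b k₀ * k₀ * (1 + hfun θ (b k₀ * k₀)) + k₀ := by nlinarith
  have hlam0 : 0 < lam := hlam ▸ div_pos hk0pos hD
  have hlam1 : lam < 1 := by
    rw [hlam, div_lt_one hD]; nlinarith
  refine ⟨⟨hlam0, hlam1⟩, ?_⟩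
  intro μ hμ
  -- matrices
  set G : M2 := ![![b k₀ * (k₀:ℝ), 0],
    ![0, -(b k₀ * (k₀:ℝ)) * (1 + hfun θ (b k₀ * (k₀:ℝ)))]] with hG_def
  have hGmat : Gmat θ b (k₀+1) = G := by
    have hc : ((k₀+1 : ℕ):ℝ) - 1 = (k₀:ℝ) := by push_cast; ring
    simp only [Gmat, Nat.add_sub_cancel, hc, hG_def]
  set S : M2 := Smat b k₀ with hS_def
  set Bm : M2 := ![![b k₀ * (k₀:ℝ), 0], ![0, 0]] with hBm_def
  -- key rank-one decomposition
  have hB : Bm = lam • G + (1 - lam) • S := by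
    funext i j
    fin_cases i <;> fin_cases j <;>
      simp [hBm_def, hG_def, hS_def, Smat, Pi.smul_apply, smul_eq_mul]
    · ring
    · have key : lam * (b k₀ * k₀ * (1 + hfun θ (b k₀ * k₀)) + k₀) = k₀ := by
        rw [hlam]; exact div_mul_cancel₀ _ hD.ne'
      linear_combination key
  -- measures
  set ν₂ : Measure M2 :=
    ENNReal.ofReal lam • Measure.dirac G + ENNReal.ofReal (1-lam) • Measure.dirac S
    with hν₂_def
  have hprob2 : IsProbabilityMeasure ν₂ := by
    constructor
    rw [hν₂_def]
    simp only [Measure.add_apply, Measure.smul_apply, smul_eq_mul,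
      MeasureTheory.measure_univ, mul_one]
    rw [← ENNReal.ofReal_add hlam0.le (by linarith), show lam + (1-lam) = 1 by ring,
      ENNReal.ofReal_one]
  -- step 1
  have es1 : ElemSplit
      (ENNReal.ofReal 1 • (ENNReal.ofReal (1/2) • Measure.dirac Bm
        + ENNReal.ofReal (1-1/2) • Measure.dirac (-Bm))
        + ENNReal.ofReal (1-1) • Measure.dirac (0:M2))
      (Measure.dirac (0:M2)) := by
    refine ⟨1, 1/2, 0, Bm, -Bm, Measure.dirac 0, inferInstance, one_pos, le_refl 1,
      by norm_num, by norm_num, ?_, ?_, ?_, rfl⟩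
    · simp
    · funext i j
      fin_cases i <;> fin_cases j <;>
        simp [hBm_def, Pi.smul_apply, smul_eq_mul] <;> ring
    · have he : (-Bm - Bm : M2) = ![![-(2 * (b k₀ * (k₀:ℝ))), 0], ![0, 0]] := by
        funext i j
        fin_cases i <;> fin_cases j <;> simp [hBm_def] <;> ring
      rw [he]
      exact rank_diag2_aux _ _ (Or.inl ⟨ne_of_lt (by nlinarith), rfl⟩)
  have lam1 : IsLaminate
      (ENNReal.ofReal 1 • (ENNReal.ofReal (1/2) • Measure.dirac Bm
        + ENNReal.ofReal (1-1/2) • Measure.dirac (-Bm))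
        + ENNReal.ofReal (1-1) • Measure.dirac (0:M2)) :=
    IsLaminate.split (IsLaminate.dirac 0) es1
  -- step 2
  have es2 : ElemSplit
      (ENNReal.ofReal (1/2) • ν₂ + ENNReal.ofReal (1-1/2) • Measure.dirac (-Bm))
      (ENNReal.ofReal 1 • (ENNReal.ofReal (1/2) • Measure.dirac Bm
        + ENNReal.ofReal (1-1/2) • Measure.dirac (-Bm))
        + ENNReal.ofReal (1-1) • Measure.dirac (0:M2)) := by
    refine ⟨1/2, lam, Bm, G, S, Measure.dirac (-Bm), inferInstance,
      by norm_num, by norm_num, hlam0, hlam1, by simp, hB, ?_, by rw [hν₂_def]⟩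
    have he : (S - G : M2)
        = ![![0, 0], ![0, (k₀:ℝ) + b k₀ * (k₀:ℝ) * (1 + hfun θ (b k₀ * (k₀:ℝ)))]] := by
      funext i j
      fin_cases i <;> fin_cases j <;> simp [hS_def, hG_def, Smat] <;> ring
    rw [he]
    exact rank_diag2_aux _ _ (Or.inr ⟨rfl, by nlinarith⟩)
  have lam2 : IsLaminate
      (ENNReal.ofReal (1/2) • ν₂ + ENNReal.ofReal (1-1/2) • Measure.dirac (-Bm)) :=
    IsLaminate.split lam1 es2
  -- step 3
  have hν₃ : ENNReal.ofReal (1/2) • ν₂ + ENNReal.ofReal (1-1/2) • Measure.dirac (-Bm)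
      = ENNReal.ofReal (1/2) • Measure.dirac (-Bm) + ENNReal.ofReal (1-1/2) • ν₂ := by
    rw [show (1:ℝ)-1/2 = 1/2 by norm_num, add_comm]
  have hBneg : (-Bm : M2) = lam • (-G) + (1 - lam) • (-S) := by
    rw [smul_neg, smul_neg, ← neg_add, hB]
  have es3 : ElemSplit
      (ENNReal.ofReal (1/2) • (ENNReal.ofReal lam • Measure.dirac (-G)
        + ENNReal.ofReal (1-lam) • Measure.dirac (-S)) + ENNReal.ofReal (1-1/2) • ν₂)
      (ENNReal.ofReal (1/2) • ν₂ + ENNReal.ofReal (1-1/2) • Measure.dirac (-Bm)) := by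
    refine ⟨1/2, lam, -Bm, -G, -S, ν₂, hprob2,
      by norm_num, by norm_num, hlam0, hlam1, hν₃, hBneg, ?_, rfl⟩
    have he : (-S - -G : M2)
        = ![![0, 0], ![0, -((k₀:ℝ) + b k₀ * (k₀:ℝ) * (1 + hfun θ (b k₀ * (k₀:ℝ))))]] := by
      funext i j
      fin_cases i <;> fin_cases j <;> simp [hS_def, hG_def, Smat] <;> ring
    rw [he]
    refine rank_diag2_aux _ _ (Or.inr ⟨rfl, ?_⟩)
    intro h
    nlinarith [neg_eq_zero.mp h]
  have lam3 : IsLaminate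
      (ENNReal.ofReal (1/2) • (ENNReal.ofReal lam • Measure.dirac (-G)
        + ENNReal.ofReal (1-lam) • Measure.dirac (-S)) + ENNReal.ofReal (1-1/2) • ν₂) :=
    IsLaminate.split lam2 es3
  -- identify μ with the constructed laminate
  have hhalf : ∀ (x : ℝ), ∀ m : Measure M2,
      ENNReal.ofReal (1/2) • (ENNReal.ofReal x • m) = ENNReal.ofReal (x/2) • m := by
    intro x m
    rw [smul_smul, ← ENNReal.ofReal_mul (by norm_num : (0:ℝ) ≤ 1/2)]
    congr 1
    ring
  have h12 : ENNReal.ofReal ((1:ℝ)-1/2) = ENNReal.ofReal (1/2) := by norm_num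
  have key : μ = ENNReal.ofReal (1/2) • (ENNReal.ofReal lam • Measure.dirac (-G)
      + ENNReal.ofReal (1-lam) • Measure.dirac (-S)) + ENNReal.ofReal (1-1/2) • ν₂ := by
    rw [hμ, hGmat, hν₂_def, h12]
    simp only [smul_add, hhalf]
    abel
  refine ⟨key ▸ lam3, ?_⟩
  -- barycenter
  intro i j
  have hne : ∀ c : ℝ, ENNReal.ofReal c ≠ ⊤ := fun c => ENNReal.ofReal_ne_top
  have hI1 := integrable_entry_aux (ENNReal.ofReal (lam/2)) (hne _) (Gmat θ b (k₀+1)) i j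
  have hI2 := integrable_entry_aux (ENNReal.ofReal (lam/2)) (hne _) (-(Gmat θ b (k₀+1))) i j
  have hI3 := integrable_entry_aux (ENNReal.ofReal ((1-lam)/2)) (hne _) (Smat b k₀) i j
  have hI4 := integrable_entry_aux (ENNReal.ofReal ((1-lam)/2)) (hne _) (-(Smat b k₀)) i j
  rw [hμ, integral_add_measure ((hI1.add_measure hI2).add_measure hI3) hI4,
    integral_add_measure (hI1.add_measure hI2) hI3, integral_add_measure hI1 hI2]
  simp only [integral_smul_measure, integral_dirac,
    ENNReal.toReal_ofReal (by linarith : (0:ℝ) ≤ lam/2),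
    ENNReal.toReal_ofReal (by linarith : (0:ℝ) ≤ (1-lam)/2),
    smul_eq_mul, Pi.neg_apply]
  ring


end
end

section
/- Fix q > 1 and a positive even integer L such that q < q_L := 1 − 1/(1+L) + 1/(1+L(1−θ)). For m ∈ ℕ and k ∈ ℕ define γ_{k+1}^{(m)} := (1 − 1/(m+k+1 + (m+b_k k)(1+h(b_k k))))·(1 − (b_{k+1}(k+1) − b_k k)/(m + b_{k+1}(k+1) + m + k + 1)). Then there exists a constant C = C(q,L) > 0 such that for every m ∈ ℕ and every N ∈ ℕ with N ≥ 1, the product β_N^{(m)} := ∏_{k=1}^{N} γ_{k+1}^{(m)} satisfies β_N^{(m)} ≤ C m^q N^{−q}. -/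
open MeasureTheory Real Set Filter
open scoped ENNReal NNReal Topology RealInnerProductSpace

noncomputable section

/-- Abstract division estimate. -/
lemma statement6_abs (T D₁ D₂ Δ c₁ c₂ ε q : ℝ)
    (hT0 : 0 < T) (hD₁T : T ≤ D₁) (hD₂T : T ≤ D₂)
    (hc₁0 : 0 < c₁) (hc₂0 : 0 < c₂)
    (hD₁ub : D₁ ≤ c₁ * T) (hD₂ub : D₂ ≤ c₂ * T)
    (hΔ0 : 0 ≤ Δ) (hΔlb : c₃ ≤ Δ) (hΔub : Δ ≤ ε * T)
    (hφ : q ≤ 1/c₁ + c₃/c₂ - ε) :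
    (1 - 1/D₁) * (1 - Δ/D₂) ≤ 1 - q/T := by
  have hD₁0 : 0 < D₁ := lt_of_lt_of_le hT0 hD₁T
  have hD₂0 : 0 < D₂ := lt_of_lt_of_le hT0 hD₂T
  have ha : (1/c₁)/T ≤ 1/D₁ := by
    rw [div_div]
    exact one_div_le_one_div_of_le hD₁0 hD₁ub
  have hs : (c₃/c₂)/T ≤ Δ/D₂ := by
    rw [div_div]
    exact div_le_div₀ hΔ0 hΔlb hD₂0 hD₂ub
  have hp : Δ/(D₁*D₂) ≤ ε/T := by
    have h1 : Δ/(D₁*D₂) ≤ Δ/(T*T) := by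
      apply div_le_div_of_nonneg_left hΔ0 (by positivity)
      exact mul_le_mul hD₁T hD₂T hT0.le hD₁0.le
    have h2 : Δ/(T*T) ≤ (ε*T)/(T*T) :=
      div_le_div_of_nonneg_right hΔub (by positivity)
    have h3 : (ε*T)/(T*T) = ε/T := by
      rw [mul_comm ε T, mul_div_mul_left _ _ (ne_of_gt hT0)]
    linarith
  have key : q/T ≤ 1/D₁ + Δ/D₂ - Δ/(D₁*D₂) := by
    have h1 : q/T ≤ (1/c₁ + c₃/c₂ - ε)/T :=
      div_le_div_of_nonneg_right hφ hT0.le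
    have h2 : (1/c₁ + c₃/c₂ - ε)/T = (1/c₁)/T + (c₃/c₂)/T - ε/T := by ring
    linarith
  have hmul : (1/D₁)*(Δ/D₂) = Δ/(D₁*D₂) := by
    rw [div_mul_div_comm, one_mul]
  nlinarith [key, hmul]

/-- Core pointwise estimate. -/
lemma statement6_core (θ L q ε x y bk bk1 hk : ℝ)
    (hθ0 : 0 < θ) (hθ1 : θ < 1) (hL : 2 ≤ L)
    (hε : 0 < ε)
    (hx : 1 ≤ x) (hy : 1 ≤ y)
    (hbk : 1 ≤ bk) (hbb : bk ≤ bk1) (hbL : bk1 ≤ L)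
    (hbk1 : L - ε ≤ bk1)
    (hhk0 : -1 < hk) (hhk : 1 + hk ≤ 1 - θ + ε)
    (hΔ : bk1 * (y+1) - bk * y ≤ ε * (x + y + 1))
    (hq1 : 1 ≤ q)
    (hφ : q ≤ 1/(1 + L*(1-θ) + L*ε) + (L-ε)/(L+1) - ε) :
    (1 - 1/(x + y + 1 + (x + bk*y)*(1+hk)))
      * (1 - (bk1*(y+1) - bk*y)/(x + bk1*(y+1) + x + y + 1))
    ≤ 1 - q/(x+y+1) := by
  have hLθ : 0 ≤ L*(1-θ) := mul_nonneg (by linarith) (by linarith)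
  have hLε : 0 ≤ L*ε := mul_nonneg (by linarith) hε.le
  have hbky : 0 ≤ bk*y := mul_nonneg (by linarith) (by linarith)
  have hhkp : (0:ℝ) ≤ 1 + hk := by linarith
  apply statement6_abs (x+y+1) _ _ _ (1 + L*(1-θ) + L*ε) (L+1) ε q
    (by linarith) ?_ ?_ (by linarith) (by linarith) ?_ ?_ ?_ ?_ hΔ hφ
  · -- T ≤ D₁
    nlinarith [mul_nonneg (by linarith : (0:ℝ) ≤ x + bk*y) hhkp]
  · -- T ≤ D₂
    nlinarith [mul_nonneg (by linarith : (0:ℝ) ≤ bk1) (by linarith : (0:ℝ) ≤ y+1)]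
  · -- D₁ ≤ c₁ T
    have h1 : (x + bk*y)*(1+hk) ≤ (x + L*y)*(1-θ+ε) := by
      apply mul_le_mul (by nlinarith) hhk hhkp (by nlinarith)
    have hxL : x + L*y ≤ L*(x+y+1) := by
      nlinarith [mul_nonneg (by linarith : (0:ℝ) ≤ L - 1) (by linarith : (0:ℝ) ≤ x)]
    have h2 := mul_le_mul_of_nonneg_right hxL (by linarith : (0:ℝ) ≤ 1-θ+ε)
    nlinarith [h1, h2]
  · -- D₂ ≤ (L+1) T
    nlinarith [mul_le_mul_of_nonneg_right hbL (by linarith : (0:ℝ) ≤ y+1)]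
  · -- 0 ≤ Δ
    nlinarith [mul_le_mul_of_nonneg_right hbb (by linarith : (0:ℝ) ≤ y)]
  · -- L - ε ≤ Δ
    nlinarith [mul_le_mul_of_nonneg_right hbb (by linarith : (0:ℝ) ≤ y)]

/-- `γ ∈ [0,1]`. -/
lemma statement6_core01 (x y bk bk1 hk : ℝ)
    (hx : 1 ≤ x) (hy : 1 ≤ y)
    (hbk : 1 ≤ bk) (hbb : bk ≤ bk1)
    (hhk0 : -1 < hk) :
    0 ≤ (1 - 1/(x + y + 1 + (x + bk*y)*(1+hk)))
      * (1 - (bk1*(y+1) - bk*y)/(x + bk1*(y+1) + x + y + 1)) ∧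
    (1 - 1/(x + y + 1 + (x + bk*y)*(1+hk)))
      * (1 - (bk1*(y+1) - bk*y)/(x + bk1*(y+1) + x + y + 1)) ≤ 1 := by
  have hbky : 0 ≤ bk*y := mul_nonneg (by linarith) (by linarith)
  have hhkp : (0:ℝ) ≤ 1 + hk := by linarith
  have hD₁1 : 1 ≤ x + y + 1 + (x + bk*y)*(1+hk) := by
    nlinarith [mul_nonneg (by linarith : (0:ℝ) ≤ x + bk*y) hhkp]
  have hbk1y : 0 ≤ bk1*(y+1) := mul_nonneg (by linarith) (by linarith)
  have hD₂0 : 0 < x + bk1*(y+1) + x + y + 1 := by linarith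
  have hΔ0 : 0 ≤ bk1*(y+1) - bk*y := by
    nlinarith [mul_le_mul_of_nonneg_right hbb (by linarith : (0:ℝ) ≤ y)]
  have hΔD₂ : bk1*(y+1) - bk*y ≤ x + bk1*(y+1) + x + y + 1 := by nlinarith
  have h1 : 0 ≤ 1 - 1/(x + y + 1 + (x + bk*y)*(1+hk)) := by
    have : 1/(x + y + 1 + (x + bk*y)*(1+hk)) ≤ 1 := by
      rw [div_le_one (by linarith)]; linarith
    linarith
  have h1' : 1 - 1/(x + y + 1 + (x + bk*y)*(1+hk)) ≤ 1 := by
    have : 0 ≤ 1/(x + y + 1 + (x + bk*y)*(1+hk)) := by positivity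
    linarith
  have h2 : 0 ≤ 1 - (bk1*(y+1) - bk*y)/(x + bk1*(y+1) + x + y + 1) := by
    have : (bk1*(y+1) - bk*y)/(x + bk1*(y+1) + x + y + 1) ≤ 1 := by
      rw [div_le_one hD₂0]; linarith
    linarith
  have h2' : 1 - (bk1*(y+1) - bk*y)/(x + bk1*(y+1) + x + y + 1) ≤ 1 := by
    have : 0 ≤ (bk1*(y+1) - bk*y)/(x + bk1*(y+1) + x + y + 1) := div_nonneg hΔ0 hD₂0.le
    linarith
  exact ⟨mul_nonneg h1 h2, mul_le_one₀ h1' h2 h2'⟩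

/-- Bernoulli corollary. -/
lemma statement6_bern (q M : ℝ) (hq : 1 ≤ q) (hM : 0 ≤ M) :
    1 - q/(M+1) ≤ (M/(M+1)) ^ q := by
  have hM1 : (0:ℝ) < M + 1 := by linarith
  have hs : (-1:ℝ) ≤ -(1/(M+1)) := by
    have : 1/(M+1) ≤ 1 := by rw [div_le_one hM1]; linarith
    linarith
  have h := one_add_mul_self_le_rpow_one_add hs hq
  have e1 : 1 + -(1/(M+1)) = M/(M+1) := by field_simp; ring
  have e2 : 1 + q * -(1/(M+1)) = 1 - q/(M+1) := by ring
  rw [e1, e2] at h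
  exact h

/-- Telescoping product. -/
lemma statement6_tele (m : ℝ) (hm : 0 ≤ m) (K : ℕ) :
    ∀ N : ℕ, K ≤ N →
      ∏ k ∈ Finset.Ioc K N, ((m + k)/(m + k + 1)) = (m + K + 1)/(m + N + 1) := by
  intro N hN
  induction N, hN using Nat.le_induction with
  | base =>
    rw [Finset.Ioc_self, Finset.prod_empty, div_self (by positivity)]
  | succ n hn ih =>
    rw [Finset.prod_Ioc_succ_top (by omega), ih]
    have h1 : (0:ℝ) < m + n + 1 := by positivity
    have h2 : (0:ℝ) < m + n + 1 + 1 := by positivity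
    push_cast
    field_simp
    ring


set_option maxHeartbeats 1000000 in
/-- **Lemma 3.5 (product estimate).** With `q < q_L`, there is `C = C(q,L) > 0` so that for
every `m ≥ 1` and `N ≥ 1`, `β_N^{(m)} := ∏_{k=1}^N γ_{k+1}^{(m)} ≤ C m^q N^{−q}`. -/
theorem statement6 (θ : ℝ) (hθ : θ ∈ Set.Ioo (0:ℝ) 1) (L : ℕ) (hLpos : 0 < L) (hLeven : Even L)
    (q : ℝ) (hq : 1 < q) (hqL : q < 1 - 1/(1+(L:ℝ)) + 1/(1+(L:ℝ)*(1-θ)))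
    (b : ℕ → ℝ)
    (hb_irr : ∀ k, 1 ≤ k → Irrational (b k))
    (hb_bound : ∀ k, 1 ≤ k → 1 < b k ∧ b k < L)
    (hb_mono : ∀ k, 1 ≤ k → b k ≤ b (k+1))
    (hb_lim : Tendsto b atTop (𝓝 (L:ℝ)))
    (hb_h : ∀ k, 1 ≤ k → hfun θ (b k * k) ∈ Set.Ioo (-θ) 0)
    (hb_hlim : Tendsto (fun k => hfun θ (b k * k)) atTop (𝓝 (-θ)))
    (hb_O : ∃ c : ℝ, 0 < c ∧ ∀ k : ℕ, 1 ≤ k → |b (k+1) - b k| ≤ c / (k:ℝ)^2) :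
    ∃ C : ℝ, 0 < C ∧ ∀ m N : ℕ, 1 ≤ m → 1 ≤ N →
      (∏ k ∈ Finset.Icc 1 N,
        ((1 - 1 / ((m:ℝ) + k + 1 + ((m:ℝ) + b k * k) * (1 + hfun θ (b k * k))))
          * (1 - (b (k+1) * ((k:ℝ)+1) - b k * k)
              / ((m:ℝ) + b (k+1) * ((k:ℝ)+1) + (m:ℝ) + k + 1))))
      ≤ C * (m:ℝ) ^ q * (N:ℝ) ^ (-q) := by
  obtain ⟨hθ0, hθ1⟩ := hθ
  have hL2 : (2:ℝ) ≤ (L:ℝ) := by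
    have : 2 ≤ L := Nat.le_of_dvd hLpos hLeven.two_dvd
    exact_mod_cast this
  have hL1 : (0:ℝ) < (L:ℝ) + 1 := by linarith
  have hB1 : (1:ℝ) ≤ 1 + (L:ℝ)*(1-θ) := by
    nlinarith [mul_nonneg (by linarith : (0:ℝ) ≤ (L:ℝ)) (by linarith : (0:ℝ) ≤ 1-θ)]
  have hqL' : q < 1/(1 + (L:ℝ)*(1-θ)) + (L:ℝ)/((L:ℝ)+1) := by
    have he : 1 - 1/(1+(L:ℝ)) + 1/(1+(L:ℝ)*(1-θ))
        = 1/(1 + (L:ℝ)*(1-θ)) + (L:ℝ)/((L:ℝ)+1) := by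
      have h1 : (1:ℝ)+(L:ℝ) ≠ 0 := by linarith
      have h2 : (1:ℝ)+(L:ℝ)*(1-θ) ≠ 0 := by linarith
      have h3 : (L:ℝ)+1 ≠ 0 := by linarith
      field_simp
      ring
    rw [he] at hqL
    exact hqL
  set ε : ℝ := (1/(1 + (L:ℝ)*(1-θ)) + (L:ℝ)/((L:ℝ)+1) - q)/((L:ℝ)+2) with hε_def
  have hε : 0 < ε := by
    apply div_pos (by linarith) (by linarith)
  have hφ : q ≤ 1/(1 + (L:ℝ)*(1-θ) + (L:ℝ)*ε) + ((L:ℝ)-ε)/((L:ℝ)+1) - ε := by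
    have hLε : 0 < (L:ℝ)*ε := mul_pos (by linarith) hε
    have hBLε : (1:ℝ) ≤ 1 + (L:ℝ)*(1-θ) + (L:ℝ)*ε := by linarith
    have h1 : 1/(1+(L:ℝ)*(1-θ)) - 1/(1+(L:ℝ)*(1-θ)+(L:ℝ)*ε)
        = ((L:ℝ)*ε)/((1+(L:ℝ)*(1-θ))*(1+(L:ℝ)*(1-θ)+(L:ℝ)*ε)) := by
      have h2 : (1:ℝ)+(L:ℝ)*(1-θ) ≠ 0 := by linarith
      have h3 : (1:ℝ)+(L:ℝ)*(1-θ)+(L:ℝ)*ε ≠ 0 := by linarith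
      field_simp
      ring
    have h2 : ((L:ℝ)*ε)/((1+(L:ℝ)*(1-θ))*(1+(L:ℝ)*(1-θ)+(L:ℝ)*ε)) ≤ (L:ℝ)*ε := by
      apply div_le_self hLε.le
      nlinarith [mul_le_mul hB1 hBLε (by norm_num : (0:ℝ) ≤ 1) (by linarith)]
    have h3 : ((L:ℝ)-ε)/((L:ℝ)+1) = (L:ℝ)/((L:ℝ)+1) - ε/((L:ℝ)+1) := by ring
    have h4 : ε/((L:ℝ)+1) ≤ ε := div_le_self hε.le (by linarith)
    have h5 : ε * ((L:ℝ)+2) = 1/(1 + (L:ℝ)*(1-θ)) + (L:ℝ)/((L:ℝ)+1) - q := by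
      rw [hε_def, div_mul_cancel₀ _ (by linarith : (L:ℝ)+2 ≠ 0)]
    linarith [h1, h2, h3.le, h3.ge, h4, h5]
  obtain ⟨c, hc0, hcb⟩ := hb_O
  rw [Metric.tendsto_atTop] at hb_hlim hb_lim
  obtain ⟨k₁, hk₁⟩ := hb_hlim ε hε
  obtain ⟨k₂, hk₂⟩ := hb_lim ε hε
  set k₃ : ℕ := ⌈((L:ℝ)+c)/ε⌉₊ with hk₃_def
  set K : ℕ := max (max k₁ k₂) (max k₃ 1) with hK_def
  have hK1 : 1 ≤ K := le_max_of_le_right (le_max_right _ _)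
  refine ⟨((K:ℝ)+2) ^ q, Real.rpow_pos_of_pos (by positivity) q, ?_⟩
  intro m N hm hN
  have hm1 : (1:ℝ) ≤ (m:ℝ) := by exact_mod_cast hm
  have hm0 : (0:ℝ) ≤ (m:ℝ) := by linarith
  have hN1 : (1:ℝ) ≤ (N:ℝ) := by exact_mod_cast hN
  have hN0 : (0:ℝ) < (N:ℝ) := by linarith
  -- γ ∈ [0,1]
  have hG01 : ∀ k : ℕ, 1 ≤ k →
      0 ≤ ((1 - 1 / ((m:ℝ) + k + 1 + ((m:ℝ) + b k * k) * (1 + hfun θ (b k * k))))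
          * (1 - (b (k+1) * ((k:ℝ)+1) - b k * k)
              / ((m:ℝ) + b (k+1) * ((k:ℝ)+1) + (m:ℝ) + k + 1))) ∧
      ((1 - 1 / ((m:ℝ) + k + 1 + ((m:ℝ) + b k * k) * (1 + hfun θ (b k * k))))
          * (1 - (b (k+1) * ((k:ℝ)+1) - b k * k)
              / ((m:ℝ) + b (k+1) * ((k:ℝ)+1) + (m:ℝ) + k + 1))) ≤ 1 := by
    intro k hk
    have hyR : (1:ℝ) ≤ (k:ℝ) := by exact_mod_cast hk
    obtain ⟨hbk1, hbkL⟩ := hb_bound k hk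
    have hmono := hb_mono k hk
    obtain ⟨hh1, hh2⟩ := hb_h k hk
    exact statement6_core01 (m:ℝ) (k:ℝ) (b k) (b (k+1)) (hfun θ (b k * k))
      hm1 hyR hbk1.le hmono (by linarith)
  -- main per-k bound
  have hGb : ∀ k : ℕ, K + 1 ≤ k →
      ((1 - 1 / ((m:ℝ) + k + 1 + ((m:ℝ) + b k * k) * (1 + hfun θ (b k * k))))
          * (1 - (b (k+1) * ((k:ℝ)+1) - b k * k)
              / ((m:ℝ) + b (k+1) * ((k:ℝ)+1) + (m:ℝ) + k + 1)))
        ≤ (((m:ℝ)+k)/((m:ℝ)+k+1)) ^ q := by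
    intro k hk
    have hk1 : 1 ≤ k := by omega
    have hyR : (1:ℝ) ≤ (k:ℝ) := by exact_mod_cast hk1
    have hk0R : (0:ℝ) < (k:ℝ) := by linarith
    obtain ⟨hbk1, hbkL⟩ := hb_bound k hk1
    obtain ⟨hbk1', hbkL'⟩ := hb_bound (k+1) (by omega)
    have hmono := hb_mono k hk1
    obtain ⟨hh1, hh2⟩ := hb_h k hk1
    have hhk : 1 + hfun θ (b k * k) ≤ 1 - θ + ε := by
      have h := hk₁ k (by omega)
      simp only [Real.dist_eq] at h
      have := (abs_lt.mp h).2
      linarith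
    have hbLb : (L:ℝ) - ε ≤ b (k+1) := by
      have h := hk₂ (k+1) (by omega)
      simp only [Real.dist_eq] at h
      have := (abs_lt.mp h).1
      linarith
    have hΔub : b (k+1) * ((k:ℝ)+1) - b k * (k:ℝ) ≤ ε * ((m:ℝ) + (k:ℝ) + 1) := by
      have h6 : b (k+1) - b k ≤ c/(k:ℝ)^2 := le_of_abs_le (hcb k hk1)
      have h7 : (k:ℝ) * (c/(k:ℝ)^2) = c/(k:ℝ) := by
        field_simp
      have h8 : c/(k:ℝ) ≤ c := div_le_self hc0.le hyR
      have h9 : b (k+1) * ((k:ℝ)+1) - b k * (k:ℝ)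
          = b (k+1) + (k:ℝ)*(b (k+1) - b k) := by ring
      have h10 : (k:ℝ)*(b (k+1) - b k) ≤ (k:ℝ)*(c/(k:ℝ)^2) :=
        mul_le_mul_of_nonneg_left h6 hk0R.le
      have hkk₃ : k₃ ≤ k := by omega
      have h11 : ((L:ℝ)+c)/ε ≤ (k:ℝ) := by
        have ha := Nat.le_ceil (((L:ℝ)+c)/ε)
        have hb' : (k₃:ℝ) ≤ (k:ℝ) := by exact_mod_cast hkk₃
        rw [← hk₃_def] at ha
        linarith
      have h12 : (L:ℝ) + c ≤ ε*(k:ℝ) := by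
        rw [div_le_iff₀ hε] at h11
        linarith
      have h13 : ε*(k:ℝ) ≤ ε*((m:ℝ)+(k:ℝ)+1) :=
        mul_le_mul_of_nonneg_left (by linarith) hε.le
      linarith [h9.le, h10, h7.le, h8, hbkL', h12, h13]
    have hcore := statement6_core θ (L:ℝ) q ε (m:ℝ) (k:ℝ) (b k) (b (k+1))
      (hfun θ (b k * k)) hθ0 hθ1 hL2 hε hm1 hyR hbk1.le hmono hbkL'.le hbLb
      (by linarith) hhk hΔub hq.le hφ
    have hbern := statement6_bern q ((m:ℝ)+(k:ℝ)) hq.le (by positivity)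
    exact le_trans hcore hbern
  -- assembly
  rw [show Finset.Icc 1 N = Finset.Ioc 0 N from Finset.Icc_add_one_left_eq_Ioc 0 N]
  have hKN2 : (N:ℝ) ≤ (K:ℝ) + 2 ∨ True := Or.inr trivial
  by_cases hNK : N ≤ K
  · -- small N case
    have hprod : (∏ k ∈ Finset.Ioc 0 N,
        ((1 - 1 / ((m:ℝ) + k + 1 + ((m:ℝ) + b k * k) * (1 + hfun θ (b k * k))))
          * (1 - (b (k+1) * ((k:ℝ)+1) - b k * k)
              / ((m:ℝ) + b (k+1) * ((k:ℝ)+1) + (m:ℝ) + k + 1)))) ≤ 1 := by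
      apply Finset.prod_le_one
      · intro k hkmem
        exact (hG01 k (Finset.mem_Ioc.mp hkmem).1).1
      · intro k hkmem
        exact (hG01 k (Finset.mem_Ioc.mp hkmem).1).2
    have hNK2 : (N:ℝ) ≤ (K:ℝ)+2 := by
      have : (N:ℝ) ≤ (K:ℝ) := by exact_mod_cast hNK
      linarith
    have h1 : (N:ℝ)^q ≤ ((K:ℝ)+2)^q :=
      Real.rpow_le_rpow hN0.le hNK2 (by linarith)
    have hmq : (1:ℝ) ≤ (m:ℝ)^q := by
      calc (1:ℝ) = 1 ^ q := (Real.one_rpow q).symm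
        _ ≤ (m:ℝ)^q := Real.rpow_le_rpow (by norm_num) hm1 (by linarith)
    have hNq : 0 < (N:ℝ)^q := Real.rpow_pos_of_pos hN0 q
    have hNnq : (N:ℝ)^(-q) = ((N:ℝ)^q)⁻¹ := Real.rpow_neg hN0.le q
    have hone : (1:ℝ) = (N:ℝ)^q * (N:ℝ)^(-q) := by
      rw [← Real.rpow_add hN0]
      simp
    have hfin : (1:ℝ) ≤ ((K:ℝ)+2)^q * (m:ℝ)^q * (N:ℝ)^(-q) := by
      rw [hone, hNnq]
      have hKq : 0 < ((K:ℝ)+2)^q := Real.rpow_pos_of_pos (by positivity) q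
      have hinv : 0 < ((N:ℝ)^q)⁻¹ := by positivity
      have : (N:ℝ)^q ≤ ((K:ℝ)+2)^q * (m:ℝ)^q := by nlinarith
      nlinarith
    linarith
  · push_neg at hNK
    rw [← Finset.prod_Ioc_consecutive _ (Nat.zero_le K) hNK.le]
    have hocK1 : (∏ k ∈ Finset.Ioc 0 K,
        ((1 - 1 / ((m:ℝ) + k + 1 + ((m:ℝ) + b k * k) * (1 + hfun θ (b k * k))))
          * (1 - (b (k+1) * ((k:ℝ)+1) - b k * k)
              / ((m:ℝ) + b (k+1) * ((k:ℝ)+1) + (m:ℝ) + k + 1)))) ≤ 1 := by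
      apply Finset.prod_le_one
      · intro k hkmem
        exact (hG01 k (Finset.mem_Ioc.mp hkmem).1).1
      · intro k hkmem
        exact (hG01 k (Finset.mem_Ioc.mp hkmem).1).2
    have hocK0 : 0 ≤ (∏ k ∈ Finset.Ioc 0 K,
        ((1 - 1 / ((m:ℝ) + k + 1 + ((m:ℝ) + b k * k) * (1 + hfun θ (b k * k))))
          * (1 - (b (k+1) * ((k:ℝ)+1) - b k * k)
              / ((m:ℝ) + b (k+1) * ((k:ℝ)+1) + (m:ℝ) + k + 1)))) :=
      Finset.prod_nonneg fun k hkmem => (hG01 k (Finset.mem_Ioc.mp hkmem).1).1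
    have h2 : (∏ k ∈ Finset.Ioc K N,
        ((1 - 1 / ((m:ℝ) + k + 1 + ((m:ℝ) + b k * k) * (1 + hfun θ (b k * k))))
          * (1 - (b (k+1) * ((k:ℝ)+1) - b k * k)
              / ((m:ℝ) + b (k+1) * ((k:ℝ)+1) + (m:ℝ) + k + 1))))
        ≤ ∏ k ∈ Finset.Ioc K N, (((m:ℝ)+k)/((m:ℝ)+k+1)) ^ q := by
      apply Finset.prod_le_prod
      · intro k hkmem
        have hkK := (Finset.mem_Ioc.mp hkmem).1
        exact (hG01 k (by omega)).1
      · intro k hkmem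
        exact hGb k (Finset.mem_Ioc.mp hkmem).1
    have h3 : ∏ k ∈ Finset.Ioc K N, (((m:ℝ)+k)/((m:ℝ)+k+1)) ^ q
        = (((m:ℝ)+K+1)/((m:ℝ)+N+1)) ^ q := by
      rw [Real.finset_prod_rpow _ _ (fun i _ => by positivity) q,
        statement6_tele (m:ℝ) hm0 K N hNK.le]
    have h4 : (((m:ℝ)+K+1)/((m:ℝ)+N+1)) ^ q ≤ (((K:ℝ)+2)*(m:ℝ)/(N:ℝ)) ^ q := by
      apply Real.rpow_le_rpow (by positivity) ?_ (by linarith)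
      apply div_le_div₀ (by positivity) ?_ hN0 (by linarith)
      nlinarith [mul_le_mul_of_nonneg_left hm1 (by positivity : (0:ℝ) ≤ (K:ℝ)+1)]
    have h5 : (((K:ℝ)+2)*(m:ℝ)/(N:ℝ)) ^ q = ((K:ℝ)+2)^q * (m:ℝ)^q * (N:ℝ)^(-q) := by
      rw [div_eq_mul_inv, Real.mul_rpow (by positivity) (by positivity),
        Real.mul_rpow (by positivity) (by positivity),
        Real.inv_rpow hN0.le, ← Real.rpow_neg hN0.le]
    have hB0 : 0 ≤ (∏ k ∈ Finset.Ioc K N,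
        ((1 - 1 / ((m:ℝ) + k + 1 + ((m:ℝ) + b k * k) * (1 + hfun θ (b k * k))))
          * (1 - (b (k+1) * ((k:ℝ)+1) - b k * k)
              / ((m:ℝ) + b (k+1) * ((k:ℝ)+1) + (m:ℝ) + k + 1)))) := by
      apply Finset.prod_nonneg
      intro k hkmem
      have hkK := (Finset.mem_Ioc.mp hkmem).1
      exact (hG01 k (by omega)).1
    calc (∏ k ∈ Finset.Ioc 0 K,
        ((1 - 1 / ((m:ℝ) + k + 1 + ((m:ℝ) + b k * k) * (1 + hfun θ (b k * k))))
          * (1 - (b (k+1) * ((k:ℝ)+1) - b k * k)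
              / ((m:ℝ) + b (k+1) * ((k:ℝ)+1) + (m:ℝ) + k + 1))))
        * (∏ k ∈ Finset.Ioc K N,
        ((1 - 1 / ((m:ℝ) + k + 1 + ((m:ℝ) + b k * k) * (1 + hfun θ (b k * k))))
          * (1 - (b (k+1) * ((k:ℝ)+1) - b k * k)
              / ((m:ℝ) + b (k+1) * ((k:ℝ)+1) + (m:ℝ) + k + 1))))
        ≤ 1 * ((((K:ℝ)+2)*(m:ℝ)/(N:ℝ)) ^ q) := by
          apply mul_le_mul hocK1 ?_ hB0 (by norm_num)
          calc _ ≤ ∏ k ∈ Finset.Ioc K N, (((m:ℝ)+k)/((m:ℝ)+k+1)) ^ q := h2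
            _ = (((m:ℝ)+K+1)/((m:ℝ)+N+1)) ^ q := h3
            _ ≤ _ := h4
      _ = ((K:ℝ)+2)^q * (m:ℝ)^q * (N:ℝ)^(-q) := by rw [one_mul, h5]


end
end

section
/- Let θ ∈ (0,1) and let A be the operator defined in the context. Then: (i) A is infinitely differentiable (C^∞) on ℝ²; (ii) A has linear growth: |A(η)| ≤ (1+√θ)|η| for all η ∈ ℝ²; (iii) A is uniformly 2-coercive: ⟨A(η), η⟩ ≥ (1−√θ)|η|² for all η ∈ ℝ², and also ⟨A(η), η⟩ ≤ (1+√θ)|η|²; (iv) A fails to be monotone: there exist η, ξ ∈ ℝ² with η ≠ ξ such that ⟨A(η) − A(ξ), η − ξ⟩ < 0. -/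
open MeasureTheory Real Set Filter
open scoped ENNReal NNReal Topology RealInnerProductSpace

noncomputable section

/-- **Properties of the operator `A`.** `A` is smooth, has linear growth, is uniformly
2-coercive, but fails to be monotone. -/
theorem statement19 (θ : ℝ) (hθ : θ ∈ Set.Ioo (0:ℝ) 1) :
    ContDiff ℝ (⊤ : ℕ∞) (Aop θ) ∧
    (∀ η : E2, ‖Aop θ η‖ ≤ (1 + Real.sqrt θ) * ‖η‖) ∧
    (∀ η : E2, (1 - Real.sqrt θ) * ‖η‖^2 ≤ ⟪Aop θ η, η⟫ ∧
      ⟪Aop θ η, η⟫ ≤ (1 + Real.sqrt θ) * ‖η‖^2) ∧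
    (∃ η ξ : E2, η ≠ ξ ∧ ⟪Aop θ η - Aop θ ξ, η - ξ⟫ < 0) := by
  obtain ⟨hθ0, hθ1⟩ := hθ
  set s := Real.sqrt θ with hs
  have hs0 : 0 < s := Real.sqrt_pos.2 hθ0
  have hs1 : s < 1 := by
    rw [hs, show (1:ℝ) = Real.sqrt 1 by simp]
    exact Real.sqrt_lt_sqrt (le_of_lt hθ0) hθ1
  have hbound : ∀ t : ℝ, -s ≤ hfun θ t ∧ hfun θ t ≤ s := by
    intro t
    unfold hfun
    constructor
    · nlinarith [Real.neg_one_le_sin (Real.pi * t), Real.sin_le_one (Real.pi * t), hs0]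
    · nlinarith [Real.sin_le_one (Real.pi * t), hs0]
  have hA : ∀ (η : E2) (i : Fin 2), (Aop θ η) i = (1 + hfun θ (η i)) * η i := fun _ _ => rfl
  have normsq : ∀ x : E2, ‖x‖ = Real.sqrt (∑ i, x i ^ 2) := by
    intro x
    rw [EuclideanSpace.norm_eq]
    congr 1
    simp [Real.norm_eq_abs, sq_abs]
  have innereq : ∀ x y : E2, ⟪x, y⟫ = ∑ i, x i * y i := by
    intro x y; simp [PiLp.inner_apply]; ring
  refine ⟨?_, ?_, ?_, ?_⟩
  · -- smoothness
    have : Aop θ = (EuclideanSpace.equiv (Fin 2) ℝ).symm ∘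
        (fun η : E2 => fun i => (1 + hfun θ (η i)) * η i) := rfl
    rw [this]
    apply (EuclideanSpace.equiv (Fin 2) ℝ).symm.contDiff.comp
    apply contDiff_pi.2
    intro i
    have hproj : ContDiff ℝ (⊤ : ℕ∞) (fun η : E2 => η i) := by
      have := (EuclideanSpace.proj (𝕜 := ℝ) (ι := Fin 2) i).contDiff (n := (⊤ : ℕ∞)); exact this
    unfold hfun
    exact (contDiff_const.add (contDiff_const.mul
      (Real.contDiff_sin.comp (contDiff_const.mul hproj)))).mul hproj
  · -- linear growth
    intro η
    rw [normsq (Aop θ η)]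
    have key : ∑ i, (Aop θ η i) ^ 2 ≤ (1 + s) ^ 2 * ∑ i, (η i) ^ 2 := by
      rw [Finset.mul_sum]
      apply Finset.sum_le_sum
      intro i _
      rw [hA, mul_pow]
      obtain ⟨h1, h2⟩ := hbound (η i)
      have hfac : 0 ≤ (s - hfun θ (η i)) * (2 + s + hfun θ (η i)) := by nlinarith
      nlinarith [mul_nonneg hfac (sq_nonneg (η i))]
    calc Real.sqrt (∑ i, (Aop θ η i) ^ 2)
        ≤ Real.sqrt ((1 + s) ^ 2 * ∑ i, (η i) ^ 2) := Real.sqrt_le_sqrt key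
      _ = (1 + s) * Real.sqrt (∑ i, (η i) ^ 2) := by
          rw [Real.sqrt_mul (by positivity), Real.sqrt_sq (by positivity)]
      _ = (1 + s) * ‖η‖ := by rw [normsq]
  · -- coercivity
    intro η
    have hnormsq : ‖η‖ ^ 2 = ∑ i, (η i) ^ 2 := by
      rw [normsq, Real.sq_sqrt (by positivity)]
    have hin : ⟪Aop θ η, η⟫ = ∑ i, (1 + hfun θ (η i)) * (η i) ^ 2 := by
      rw [innereq]
      apply Finset.sum_congr rfl
      intro i _
      rw [hA]; ring
    rw [hin, hnormsq]
    constructor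
    · rw [Finset.mul_sum]
      apply Finset.sum_le_sum
      intro i _
      obtain ⟨h1, h2⟩ := hbound (η i)
      nlinarith [sq_nonneg (η i)]
    · rw [Finset.mul_sum]
      apply Finset.sum_le_sum
      intro i _
      obtain ⟨h1, h2⟩ := hbound (η i)
      nlinarith [sq_nonneg (η i)]
  · -- failure of monotonicity
    set m : ℕ := ⌈s⁻¹⌉₊ with hm
    have hsm : 1 ≤ s * m := by
      have h1 : s⁻¹ ≤ (m : ℝ) := Nat.le_ceil _
      have := mul_le_mul_of_nonneg_left h1 (le_of_lt hs0)
      rwa [mul_inv_cancel₀ (ne_of_gt hs0)] at this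
    set a : ℝ := 2 * (m : ℝ) + 1/2 with ha
    set b : ℝ := 2 * (m : ℝ) + 3/2 with hb
    have hsa : Real.sin (Real.pi * a) = 1 := by
      have : Real.pi * a = Real.pi / 2 + (m : ℤ) * (2 * Real.pi) := by
        rw [ha]; push_cast; ring
      rw [this, Real.sin_add_int_mul_two_pi, Real.sin_pi_div_two]
    have hsb : Real.sin (Real.pi * b) = -1 := by
      have : Real.pi * b = -(Real.pi / 2) + ((m + 1 : ℤ)) * (2 * Real.pi) := by
        rw [hb]; push_cast; ring
      rw [this, Real.sin_add_int_mul_two_pi]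
      simp
    set η : E2 := (EuclideanSpace.equiv (Fin 2) ℝ).symm ![a, 0] with hη
    set ξ : E2 := (EuclideanSpace.equiv (Fin 2) ℝ).symm ![b, 0] with hξ
    have hη0 : η 0 = a := rfl
    have hη1 : η 1 = 0 := rfl
    have hξ0 : ξ 0 = b := rfl
    have hξ1 : ξ 1 = 0 := rfl
    refine ⟨η, ξ, ?_, ?_⟩
    · intro h
      have : η 0 = ξ 0 := by rw [h]
      rw [hη0, hξ0, ha, hb] at this
      linarith
    · have hAη0 : Aop θ η 0 = (1 + s) * a := by
        rw [hA, hη0]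
        unfold hfun
        rw [hsa, ← hs]; ring
      have hAξ0 : Aop θ ξ 0 = (1 - s) * b := by
        rw [hA, hξ0]
        unfold hfun
        rw [hsb, ← hs]; ring
      have hAη1 : Aop θ η 1 = 0 := by rw [hA, hη1]; ring
      have hAξ1 : Aop θ ξ 1 = 0 := by rw [hA, hξ1]; ring
      have hsub : ∀ (x y : E2) (i : Fin 2), (x - y) i = x i - y i := fun _ _ _ => rfl
      have hin : ⟪Aop θ η - Aop θ ξ, η - ξ⟫
          = (Aop θ η 0 - Aop θ ξ 0) * (η 0 - ξ 0)
            + (Aop θ η 1 - Aop θ ξ 1) * (η 1 - ξ 1) := by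
        rw [innereq, Fin.sum_univ_two, hsub, hsub, hsub, hsub]
      rw [hin, hAη0, hAξ0, hAη1, hAξ1, hη0, hη1, hξ0, hξ1, ha, hb]
      nlinarith [hsm, hs0, (Nat.cast_nonneg m : (0:ℝ) ≤ (m:ℝ))]

end
end
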